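/- arXiv:1210.2962 — 3 statements merged into one kernel-verified Lean document; each statement's English description precedes it below -/
import Mathlib

section
/- Let U ⊆ ℝ² be open and χ, φ : U → ℝ be C² functions whose Jacobian satisfies χ_x φ_y − χ_y φ_x ≡ 1 on U. Let Ω = {(x,y,p) ∈ ℝ³ : (x,y) ∈ U, χ_x(x,y) + p χ_y(x,y) ≠ 0} and let P : Ω → ℝ³ be the first prolongation P(x,y,p) = (χ(x,y), φ(x,y), q(x,y,p)) with q = (φ_x + p φ_y)/(χ_x + p χ_y). Write 𝔇q = q_x + p q_y + f q_p for a given continuous f : Ω → ℝ, and define f̄ along P by f̄(P(x,y,p)) := (𝔇q)(x,y,p)/(χ_x + p χ_y). Then there exists a function u₂ : Ω → ℝ such that for every (x,y,p) ∈ Ω and every tangent vector v = (v₁, v₂, v₃) ∈ ℝ³, writing (w₁, w₂, w₃) = DP_(x,y,p)(v) for the image under the total derivative of P, the following three identities hold with u₁ := 1/(χ_x + p χ_y) and u₃ := χ_y: (i) w₂ − q·w₁ = u₁·(v₂ − p v₁); (ii) w₃ − f̄(P(x,y,p))·w₁ = u₂·(v₂ − p v₁) + u₁²·(v₃ − f(x,y,p)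 v₁); (iii) w₁ = u₃·(v₂ − p v₁) + (1/u₁)·v₁. (That is, the pullback under P of the coframe (dȳ − ȳ' dx̄, dȳ' − f̄ dx̄, dx̄) is related to (dy − p dx, dp − f dx, dx) by the lower-triangular matrix with rows (u₁,0,0), (u₂,u₁²,0), (u₃,0,1/u₁).) -/
/-!
Differentiating `q = (φ_x + p φ_y)/(χ_x + p χ_y)` in `p` gives the Jacobian of `(χ, φ)` over
`(χ_x + p χ_y)²`, i.e. `q_p = u₁²`. Writing
`w₁ = χ_x v₁ + χ_y v₂ = (χ_x + p χ_y) v₁ + χ_y (v₂ - p v₁)` gives (iii); the Jacobian identity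
turns `w₂ - q w₁` into `u₁ (v₂ - p v₁)`; and in `w₃ - f̄ w₁ = q_x v₁ + q_y v₂ + q_p v₃ - f̄ w₁`
the `v₁`-terms of `𝔇q` cancel, leaving (ii) with `u₂ = q_y - f̄ χ_y`.
-/

/-- Partial derivative with respect to the first variable of a function on `ℝ²`. -/
noncomputable def pdx (g : ℝ × ℝ → ℝ) (z : ℝ × ℝ) : ℝ := fderiv ℝ g z (1, 0)

/-- Partial derivative with respect to the second variable of a function on `ℝ²`. -/
noncomputable def pdy (g : ℝ × ℝ → ℝ) (z : ℝ × ℝ) : ℝ := fderiv ℝ g z (0, 1)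

/-- Partial derivative in the `x`-direction of a function on `ℝ³ = J¹(ℝ,ℝ)`. -/
noncomputable def Dx3 (g : ℝ × ℝ × ℝ → ℝ) (z : ℝ × ℝ × ℝ) : ℝ := fderiv ℝ g z (1, 0, 0)

/-- Partial derivative in the `y`-direction of a function on `ℝ³ = J¹(ℝ,ℝ)`. -/
noncomputable def Dy3 (g : ℝ × ℝ × ℝ → ℝ) (z : ℝ × ℝ × ℝ) : ℝ := fderiv ℝ g z (0, 1, 0)

/-- Partial derivative in the `p`-direction of a function on `ℝ³ = J¹(ℝ,ℝ)`. -/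
noncomputable def Dp3 (g : ℝ × ℝ × ℝ → ℝ) (z : ℝ × ℝ × ℝ) : ℝ := fderiv ℝ g z (0, 0, 1)

theorem ContinuousLinearMap.map_pair {R : Type*} [Semiring R] [TopologicalSpace R]
    (L : R × R →L[R] R) (a b : R) :
    L (a, b) = a * L (1, 0) + b * L (0, 1) := by
  rw [← smul_eq_mul, ← smul_eq_mul, ← map_smul, ← map_smul, ← map_add]
  simp

theorem ContinuousLinearMap.map_triple {R : Type*} [Semiring R] [TopologicalSpace R]
    (L : R × R × R →L[R] R) (a b c : R) :
    L (a, b, c) = a * L (1, 0, 0) + b * L (0, 1, 0) + c * L (0, 0, 1) := by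
  rw [← smul_eq_mul, ← smul_eq_mul, ← smul_eq_mul, ← map_smul, ← map_smul, ← map_smul,
    ← map_add, ← map_add]
  simp

theorem ContDiffOn.differentiableAt_fderiv_apply {𝕜 E F : Type*} [NontriviallyNormedField 𝕜]
    [NormedAddCommGroup E] [NormedSpace 𝕜 E] [NormedAddCommGroup F] [NormedSpace 𝕜 F]
    {U : Set E} (hU : IsOpen U) {g : E → F} (hg : ContDiffOn 𝕜 2 g U) {z : E} (hz : z ∈ U)
    (v : E) : DifferentiableAt 𝕜 (fun w => fderiv 𝕜 g w v) z := by
  have hg' : ContDiffOn 𝕜 1 (fun w => fderiv 𝕜 g w v) U :=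
    (ContinuousLinearMap.apply 𝕜 F v).contDiff.comp_contDiffOn
      (hg.fderiv_of_isOpen hU (by norm_num))
  exact (hg'.differentiableOn one_ne_zero).differentiableAt (hU.mem_nhds hz)

noncomputable def prolongedSlope (χ φ : ℝ × ℝ → ℝ) (z : ℝ × ℝ × ℝ) : ℝ :=
  (pdx φ (z.1, z.2.1) + z.2.2 * pdy φ (z.1, z.2.1)) /
    (pdx χ (z.1, z.2.1) + z.2.2 * pdy χ (z.1, z.2.1))

section Prolongation

variable {U : Set (ℝ × ℝ)} {χ φ : ℝ × ℝ → ℝ} {x y p : ℝ}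

theorem differentiableAt_prolongedSlope (hU : IsOpen U) (hχ : ContDiffOn ℝ 2 χ U)
    (hφ : ContDiffOn ℝ 2 φ U) (hxy : (x, y) ∈ U) (hA : pdx χ (x, y) + p * pdy χ (x, y) ≠ 0) :
    DifferentiableAt ℝ (prolongedSlope χ φ) (x, y, p) := by
  have hφx : DifferentiableAt ℝ (pdx φ) (x, y) := hφ.differentiableAt_fderiv_apply hU hxy _
  have hφy : DifferentiableAt ℝ (pdy φ) (x, y) := hφ.differentiableAt_fderiv_apply hU hxy _
  have hχx : DifferentiableAt ℝ (pdx χ) (x, y) := hχ.differentiableAt_fderiv_apply hU hxy _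
  have hχy : DifferentiableAt ℝ (pdy χ) (x, y) := hχ.differentiableAt_fderiv_apply hU hxy _
  unfold prolongedSlope
  fun_prop (disch := exact hA)

theorem Dp3_prolongedSlope (hU : IsOpen U) (hχ : ContDiffOn ℝ 2 χ U)
    (hφ : ContDiffOn ℝ 2 φ U) (hxy : (x, y) ∈ U) (hA : pdx χ (x, y) + p * pdy χ (x, y) ≠ 0) :
    Dp3 (prolongedSlope χ φ) (x, y, p) =
      (pdx χ (x, y) * pdy φ (x, y) - pdy χ (x, y) * pdx φ (x, y)) /
        (pdx χ (x, y) + p * pdy χ (x, y)) ^ 2 := by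
  have hline : HasDerivAt (fun t : ℝ => ((x, y, t) : ℝ × ℝ × ℝ)) (0, 0, 1) p :=
    (hasDerivAt_const p x).prodMk ((hasDerivAt_const p y).prodMk (hasDerivAt_id p))
  have hchain : HasDerivAt (fun t => prolongedSlope χ φ (x, y, t))
      (Dp3 (prolongedSlope χ φ) (x, y, p)) p :=
    (differentiableAt_prolongedSlope hU hχ hφ hxy hA).hasFDerivAt.comp_hasDerivAt
      (l := prolongedSlope χ φ) p hline
  have hquot : HasDerivAt (fun t => prolongedSlope χ φ (x, y, t))
      ((pdy φ (x, y) * (pdx χ (x, y) + p * pdy χ (x, y)) -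
        (pdx φ (x, y) + p * pdy φ (x, y)) * pdy χ (x, y)) /
          (pdx χ (x, y) + p * pdy χ (x, y)) ^ 2) p := by
    refine HasDerivAt.div ?_ ?_ hA
    · simpa using ((hasDerivAt_id p).mul_const (pdy φ (x, y))).const_add (pdx φ (x, y))
    · simpa using ((hasDerivAt_id p).mul_const (pdy χ (x, y))).const_add (pdx χ (x, y))
  rw [hchain.unique hquot]
  ring

end Prolongation

theorem fderiv_prolongation_apply {χ φ : ℝ × ℝ → ℝ} {Q : ℝ × ℝ × ℝ → ℝ} {x y p : ℝ}
    (hχ : DifferentiableAt ℝ χ (x, y)) (hφ : DifferentiableAt ℝ φ (x, y))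
    (hQ : DifferentiableAt ℝ Q (x, y, p)) (v₁ v₂ v₃ : ℝ) :
    fderiv ℝ (fun z : ℝ × ℝ × ℝ => (χ (z.1, z.2.1), φ (z.1, z.2.1), Q z)) (x, y, p)
        (v₁, v₂, v₃) =
      (v₁ * pdx χ (x, y) + v₂ * pdy χ (x, y), v₁ * pdx φ (x, y) + v₂ * pdy φ (x, y),
        v₁ * Dx3 Q (x, y, p) + v₂ * Dy3 Q (x, y, p) + v₃ * Dp3 Q (x, y, p)) := by
  have hπ : HasFDerivAt (fun z : ℝ × ℝ × ℝ => (z.1, z.2.1)) _ (x, y, p) :=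
    hasFDerivAt_fst.prodMk (hasFDerivAt_snd (𝕜 := ℝ) (p := (x, y, p))).fst
  have hP : HasFDerivAt (fun z : ℝ × ℝ × ℝ => (χ (z.1, z.2.1), φ (z.1, z.2.1), Q z)) _ (x, y, p) :=
    (hχ.hasFDerivAt.comp (x, y, p) hπ).prodMk
      ((hφ.hasFDerivAt.comp (x, y, p) hπ).prodMk hQ.hasFDerivAt)
  rw [hP.fderiv]
  exact Prod.ext (ContinuousLinearMap.map_pair _ v₁ v₂)
    (Prod.ext (ContinuousLinearMap.map_pair _ v₁ v₂) (ContinuousLinearMap.map_triple _ v₁ v₂ v₃))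

theorem stmt1_general (U : Set (ℝ × ℝ)) (hU : IsOpen U)
    (χ φ : ℝ × ℝ → ℝ) (hχ : ContDiffOn ℝ 2 χ U) (hφ : ContDiffOn ℝ 2 φ U)
    (hJ : ∀ z ∈ U, pdx χ z * pdy φ z - pdy χ z * pdx φ z = 1)
    (q : ℝ × ℝ × ℝ → ℝ)
    (hq : ∀ z : ℝ × ℝ × ℝ, q z =
      (pdx φ (z.1, z.2.1) + z.2.2 * pdy φ (z.1, z.2.1)) /
        (pdx χ (z.1, z.2.1) + z.2.2 * pdy χ (z.1, z.2.1)))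
    (P : ℝ × ℝ × ℝ → ℝ × ℝ × ℝ)
    (hP : ∀ z : ℝ × ℝ × ℝ, P z = (χ (z.1, z.2.1), φ (z.1, z.2.1), q z))
    (f : ℝ × ℝ × ℝ → ℝ) :
    ∃ u₂ : ℝ × ℝ × ℝ → ℝ, ∀ x y p : ℝ, (x, y) ∈ U →
      pdx χ (x, y) + p * pdy χ (x, y) ≠ 0 →
      ∀ v : ℝ × ℝ × ℝ,
        -- (i)  w₂ − q·w₁ = u₁·(v₂ − p v₁)
        ((fderiv ℝ P (x, y, p) v).2.1 - q (x, y, p) * (fderiv ℝ P (x, y, p) v).1 =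
          (1 / (pdx χ (x, y) + p * pdy χ (x, y))) * (v.2.1 - p * v.1)) ∧
        -- (ii) w₃ − f̄(P(x,y,p))·w₁ = u₂·(v₂ − p v₁) + u₁²·(v₃ − f v₁)
        ((fderiv ℝ P (x, y, p) v).2.2 -
            ((Dx3 q (x, y, p) + p * Dy3 q (x, y, p) + f (x, y, p) * Dp3 q (x, y, p)) /
              (pdx χ (x, y) + p * pdy χ (x, y))) * (fderiv ℝ P (x, y, p) v).1 =
          u₂ (x, y, p) * (v.2.1 - p * v.1) +
            (1 / (pdx χ (x, y) + p * pdy χ (x, y))) ^ 2 * (v.2.2 - f (x, y, p) * v.1)) ∧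
        -- (iii) w₁ = u₃·(v₂ − p v₁) + (1/u₁)·v₁
        ((fderiv ℝ P (x, y, p) v).1 =
          pdy χ (x, y) * (v.2.1 - p * v.1) +
            (1 / (1 / (pdx χ (x, y) + p * pdy χ (x, y)))) * v.1) := by
  obtain rfl : q = prolongedSlope χ φ := funext hq
  obtain rfl : P = fun z => (χ (z.1, z.2.1), φ (z.1, z.2.1), prolongedSlope χ φ z) := funext hP
  refine ⟨fun z => Dy3 (prolongedSlope χ φ) z -
    (Dx3 (prolongedSlope χ φ) z + z.2.2 * Dy3 (prolongedSlope χ φ) z +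
      f z * Dp3 (prolongedSlope χ φ) z) / (pdx χ (z.1, z.2.1) + z.2.2 * pdy χ (z.1, z.2.1)) *
        pdy χ (z.1, z.2.1), ?_⟩
  rintro x y p hxy hA ⟨v₁, v₂, v₃⟩
  have hJxy := hJ (x, y) hxy
  have hDiff (g : ℝ × ℝ → ℝ) (hg : ContDiffOn ℝ 2 g U) : DifferentiableAt ℝ g (x, y) :=
    (hg.differentiableOn two_ne_zero).differentiableAt (hU.mem_nhds hxy)
  have hqp : Dp3 (prolongedSlope χ φ) (x, y, p) = 1 / (pdx χ (x, y) + p * pdy χ (x, y)) ^ 2 := by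
    rw [Dp3_prolongedSlope hU hχ hφ hxy hA, hJxy]
  rw [fderiv_prolongation_apply (hDiff χ hχ) (hDiff φ hφ)
    (differentiableAt_prolongedSlope hU hχ hφ hxy hA)]
  refine ⟨?_, ?_, ?_⟩
  · rw [prolongedSlope]
    field_simp
    linear_combination (v₂ - p * v₁) * hJxy
  · simp only [hqp]
    field_simp
    ring
  · rw [one_div_one_div]
    ring

/-- The pullback under the first prolongation `P` of an area-preserving point
transformation of the coframe `(dȳ − ȳ' dx̄, dȳ' − f̄ dx̄, dx̄)` is related to
`(dy − p dx, dp − f dx, dx)` by a lower-triangular matrix with rows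
`(u₁,0,0), (u₂,u₁²,0), (u₃,0,1/u₁)` where `u₁ = 1/(χ_x + p χ_y)`, `u₃ = χ_y`. -/
theorem stmt1 (U : Set (ℝ × ℝ)) (hU : IsOpen U)
    (χ φ : ℝ × ℝ → ℝ) (hχ : ContDiffOn ℝ 2 χ U) (hφ : ContDiffOn ℝ 2 φ U)
    (hJ : ∀ z ∈ U, pdx χ z * pdy φ z - pdy χ z * pdx φ z = 1)
    (q : ℝ × ℝ × ℝ → ℝ)
    (hq : ∀ z : ℝ × ℝ × ℝ, q z =
      (pdx φ (z.1, z.2.1) + z.2.2 * pdy φ (z.1, z.2.1)) /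
        (pdx χ (z.1, z.2.1) + z.2.2 * pdy χ (z.1, z.2.1)))
    (P : ℝ × ℝ × ℝ → ℝ × ℝ × ℝ)
    (hP : ∀ z : ℝ × ℝ × ℝ, P z = (χ (z.1, z.2.1), φ (z.1, z.2.1), q z))
    (f : ℝ × ℝ × ℝ → ℝ)
    (hf : ContinuousOn f
      {z : ℝ × ℝ × ℝ | (z.1, z.2.1) ∈ U ∧
        pdx χ (z.1, z.2.1) + z.2.2 * pdy χ (z.1, z.2.1) ≠ 0}) :
    ∃ u₂ : ℝ × ℝ × ℝ → ℝ, ∀ x y p : ℝ, (x, y) ∈ U →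
      pdx χ (x, y) + p * pdy χ (x, y) ≠ 0 →
      ∀ v : ℝ × ℝ × ℝ,
        -- (i)  w₂ − q·w₁ = u₁·(v₂ − p v₁)
        ((fderiv ℝ P (x, y, p) v).2.1 - q (x, y, p) * (fderiv ℝ P (x, y, p) v).1 =
          (1 / (pdx χ (x, y) + p * pdy χ (x, y))) * (v.2.1 - p * v.1)) ∧
        -- (ii) w₃ − f̄(P(x,y,p))·w₁ = u₂·(v₂ − p v₁) + u₁²·(v₃ − f v₁)
        ((fderiv ℝ P (x, y, p) v).2.2 -
            ((Dx3 q (x, y, p) + p * Dy3 q (x, y, p) + f (x, y, p) * Dp3 q (x, y, p)) /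
              (pdx χ (x, y) + p * pdy χ (x, y))) * (fderiv ℝ P (x, y, p) v).1 =
          u₂ (x, y, p) * (v.2.1 - p * v.1) +
            (1 / (pdx χ (x, y) + p * pdy χ (x, y))) ^ 2 * (v.2.2 - f (x, y, p) * v.1)) ∧
        -- (iii) w₁ = u₃·(v₂ − p v₁) + (1/u₁)·v₁
        ((fderiv ℝ P (x, y, p) v).1 =
          pdy χ (x, y) * (v.2.1 - p * v.1) +
            (1 / (1 / (pdx χ (x, y) + p * pdy χ (x, y)))) * v.1) :=
  stmt1_general U hU χ φ hχ hφ hJ q hq P hP f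
end

section
/- Let U ⊆ ℝ² be open, χ, φ : U → ℝ be C² functions, and f : Ω → ℝ continuous, where Ω = {(x,y,p) : (x,y) ∈ U, χ_x + p χ_y ≠ 0}; let q(x,y,p) = (φ_x + p φ_y)/(χ_x + p χ_y) and 𝔇q = q_x + p q_y + f q_p. Let c : I → ℝ be twice differentiable on an open interval I with (x, c(x), c'(x)) ∈ Ω and c''(x) = f(x, c(x), c'(x)) for all x ∈ I. Set ξ(x) = χ(x,c(x)), η(x) = φ(x,c(x)). Then: (i) the function x ↦ η'(x)/ξ'(x) is differentiable with derivative (𝔇q)(x, c(x), c'(x)); (ii) consequently, if ȳ is a twice differentiable function on an interval containing ξ(I) with ȳ(ξ(x)) = η(x) for all x ∈ I, then ȳ''(ξ(x)) = (𝔇q)(x,c(x),c'(x))/(χ_x(x,c(x)) + c'(x) χ_y(x,c(x))) for all x ∈ I. In particular the transformed curve solves the second order ODE ȳ'' = f̄ where f̄ is characterized along the prolongation by f̄(χ, φ, q) = 𝔇q/(χ_x + p χ_y). -/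
/-- Total derivative operator `𝔇 = ∂_x + p ∂_y + f ∂_p` associated with `f`. -/
noncomputable def Dtot (f g : ℝ × ℝ × ℝ → ℝ) (z : ℝ × ℝ × ℝ) : ℝ :=
  Dx3 g z + z.2.2 * Dy3 g z + f z * Dp3 g z

/-!
Along the curve `s ↦ (s, c s)` the chain rule gives `ξ' = χ_x + c' χ_y` and `η' = φ_x + c' φ_y`,
so `η'/ξ'` is `q` evaluated along the prolongation `s ↦ (s, c s, c' s)`. Differentiating once
more, using `c'' = f(x, c, c')`, yields `(η'/ξ')' = 𝔇q`. For the transformed curve, `ȳ ∘ ξ = η`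
gives `ȳ' ∘ ξ = η'/ξ'`, and differentiating this identity again gives `ȳ'' ∘ ξ = 𝔇q / ξ'`.
-/

open Filter Topology

lemma fderiv_apply_one_mk (g : ℝ × ℝ → ℝ) (z : ℝ × ℝ) (p : ℝ) :
    fderiv ℝ g z (1, p) = pdx g z + p * pdy g z := by
  have h : ((1 : ℝ), p) = ((1 : ℝ), (0 : ℝ)) + p • ((0 : ℝ), (1 : ℝ)) := by
    simp
  rw [h, map_add, map_smul, smul_eq_mul]
  rfl

lemma fderiv_apply_one_mk_mk (g : ℝ × ℝ × ℝ → ℝ) (z : ℝ × ℝ × ℝ) (p r : ℝ) :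
    fderiv ℝ g z (1, p, r) = Dx3 g z + p * Dy3 g z + r * Dp3 g z := by
  have h : ((1 : ℝ), p, r) = ((1 : ℝ), (0 : ℝ), (0 : ℝ)) + p • ((0 : ℝ), (1 : ℝ), (0 : ℝ))
      + r • ((0 : ℝ), (0 : ℝ), (1 : ℝ)) := by
    simp
  rw [h, map_add, map_add, map_smul, map_smul, smul_eq_mul, smul_eq_mul]
  rfl

lemma hasDerivAt_comp_graph {g : ℝ × ℝ → ℝ} {c : ℝ → ℝ} {t c' : ℝ}
    (hg : DifferentiableAt ℝ g (t, c t)) (hc : HasDerivAt c c' t) :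
    HasDerivAt (fun s => g (s, c s)) (pdx g (t, c t) + c' * pdy g (t, c t)) t := by
  have h := hg.hasFDerivAt.comp_hasDerivAt t ((hasDerivAt_id t).prodMk hc)
  rwa [fderiv_apply_one_mk] at h

lemma hasDerivAt_comp_graph_mk {g : ℝ × ℝ × ℝ → ℝ} {a b : ℝ → ℝ} {t a' b' : ℝ}
    (hg : DifferentiableAt ℝ g (t, a t, b t)) (ha : HasDerivAt a a' t) (hb : HasDerivAt b b' t) :
    HasDerivAt (fun s => g (s, a s, b s))
      (Dx3 g (t, a t, b t) + a' * Dy3 g (t, a t, b t) + b' * Dp3 g (t, a t, b t)) t := by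
  have h := hg.hasFDerivAt.comp_hasDerivAt t ((hasDerivAt_id t).prodMk (ha.prodMk hb))
  rwa [fderiv_apply_one_mk_mk] at h

lemma differentiableAt_pdx_add_mul_pdy {g : ℝ × ℝ → ℝ} {w : ℝ × ℝ × ℝ}
    (hg : ContDiffAt ℝ 2 g (w.1, w.2.1)) :
    DifferentiableAt ℝ
      (fun z : ℝ × ℝ × ℝ => pdx g (z.1, z.2.1) + z.2.2 * pdy g (z.1, z.2.1)) w := by
  have hπ : DifferentiableAt ℝ (fun z : ℝ × ℝ × ℝ => (z.1, z.2.1)) w :=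
    differentiableAt_fst.prodMk differentiableAt_snd.fst
  have hDg : DifferentiableAt ℝ (fderiv ℝ g) (w.1, w.2.1) :=
    (hg.fderiv_right le_rfl).differentiableAt one_ne_zero
  have hpd (v : ℝ × ℝ) :
      DifferentiableAt ℝ (fun z : ℝ × ℝ × ℝ => fderiv ℝ g (z.1, z.2.1) v) w :=
    DifferentiableAt.comp (g := fun u => fderiv ℝ g u v) w
      (hDg.clm_apply (differentiableAt_const v)) hπ
  exact (hpd (1, 0)).add (differentiableAt_snd.snd.mul (hpd (0, 1)))

lemma deriv_eq_div_of_comp_eventuallyEq {F ξ η : ℝ → ℝ} {t ξ' η' : ℝ}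
    (hF : DifferentiableAt ℝ F (ξ t)) (hξ : HasDerivAt ξ ξ' t) (hξ' : ξ' ≠ 0)
    (hη : HasDerivAt η η' t) (h : F ∘ ξ =ᶠ[𝓝 t] η) :
    deriv F (ξ t) = η' / ξ' := by
  rw [eq_div_iff hξ']
  exact ((hF.hasDerivAt.comp t hξ).congr_of_eventuallyEq h.symm).unique hη

theorem stmt4_general (U : Set (ℝ × ℝ)) (hU : IsOpen U)
    (χ φ : ℝ × ℝ → ℝ) (hχ : ContDiffOn ℝ 2 χ U) (hφ : ContDiffOn ℝ 2 φ U)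
    (f : ℝ × ℝ × ℝ → ℝ)
    (q : ℝ × ℝ × ℝ → ℝ)
    (hq : ∀ z : ℝ × ℝ × ℝ, q z =
      (pdx φ (z.1, z.2.1) + z.2.2 * pdy φ (z.1, z.2.1)) /
        (pdx χ (z.1, z.2.1) + z.2.2 * pdy χ (z.1, z.2.1)))
    (I : Set ℝ) (hIopen : IsOpen I)
    (c : ℝ → ℝ)
    (hc : ∀ x ∈ I, DifferentiableAt ℝ c x)
    (hc' : ∀ x ∈ I, DifferentiableAt ℝ (deriv c) x)
    (hmemU : ∀ x ∈ I, (x, c x) ∈ U)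
    (hmemΩ : ∀ x ∈ I, pdx χ (x, c x) + deriv c x * pdy χ (x, c x) ≠ 0)
    (hode : ∀ x ∈ I, deriv (deriv c) x = f (x, c x, deriv c x))
    (ξ η : ℝ → ℝ)
    (hξ : ∀ x : ℝ, ξ x = χ (x, c x)) (hη : ∀ x : ℝ, η x = φ (x, c x)) :
    -- (i) the slope function `x ↦ η'(x)/ξ'(x)` has derivative `(𝔇q)(x, c x, c' x)`
    (∀ x ∈ I, HasDerivAt (fun t => deriv η t / deriv ξ t)
      (Dtot f q (x, c x, deriv c x)) x) ∧
    -- (ii) the transformed curve solves `ȳ'' = f̄`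
    (∀ J : Set ℝ, J.OrdConnected → ξ '' I ⊆ J →
      ∀ ybar : ℝ → ℝ,
        (∀ t ∈ J, DifferentiableAt ℝ ybar t) →
        (∀ t ∈ J, DifferentiableAt ℝ (deriv ybar) t) →
        (∀ x ∈ I, ybar (ξ x) = η x) →
        ∀ x ∈ I, deriv (deriv ybar) (ξ x) =
          Dtot f q (x, c x, deriv c x) /
            (pdx χ (x, c x) + deriv c x * pdy χ (x, c x))) := by
  obtain rfl : ξ = _ := funext hξ
  obtain rfl : η = _ := funext hη
  have hC2 {g : ℝ × ℝ → ℝ} (hg : ContDiffOn ℝ 2 g U) {t : ℝ} (ht : t ∈ I) :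
      ContDiffAt ℝ 2 g (t, c t) :=
    hg.contDiffAt (hU.mem_nhds (hmemU t ht))
  have hderiv {g : ℝ × ℝ → ℝ} (hg : ContDiffOn ℝ 2 g U) {t : ℝ} (ht : t ∈ I) :=
    hasDerivAt_comp_graph ((hC2 hg ht).differentiableAt two_ne_zero) (hc t ht).hasDerivAt
  have hslope : ∀ t ∈ I, deriv (fun s => φ (s, c s)) t / deriv (fun s => χ (s, c s)) t =
      q (t, c t, deriv c t) := fun t ht => by
    rw [(hderiv hφ ht).deriv, (hderiv hχ ht).deriv, hq]
  have part1 : ∀ x ∈ I, HasDerivAt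
      (fun t => deriv (fun s => φ (s, c s)) t / deriv (fun s => χ (s, c s)) t)
      (Dtot f q (x, c x, deriv c x)) x := fun x hx => by
    have hq₀ : DifferentiableAt ℝ q (x, c x, deriv c x) :=
      have hφ₁ := differentiableAt_pdx_add_mul_pdy (w := (x, c x, deriv c x)) (hC2 hφ hx)
      have hχ₁ := differentiableAt_pdx_add_mul_pdy (w := (x, c x, deriv c x)) (hC2 hχ hx)
      (hφ₁.mul (hχ₁.inv (hmemΩ x hx))).congr_of_eventuallyEq
        (.of_forall fun z => (hq z).trans (div_eq_mul_inv _ _))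
    have hqc := hasDerivAt_comp_graph_mk hq₀ (hc x hx).hasDerivAt (hc' x hx).hasDerivAt
    rw [hode x hx] at hqc
    exact hqc.congr_of_eventuallyEq (eventually_of_mem (hIopen.mem_nhds hx) hslope)
  refine ⟨part1, fun J _ hsub ybar hy1 hy2 heq x hx => ?_⟩
  have hJ {t : ℝ} (ht : t ∈ I) : χ (t, c t) ∈ J := hsub ⟨t, ht, rfl⟩
  have hy1ξ : ∀ t ∈ I, deriv ybar (χ (t, c t)) =
      deriv (fun s => φ (s, c s)) t / deriv (fun s => χ (s, c s)) t := fun t ht => by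
    rw [(hderiv hφ ht).deriv, (hderiv hχ ht).deriv]
    exact deriv_eq_div_of_comp_eventuallyEq (hy1 _ (hJ ht)) (hderiv hχ ht) (hmemΩ t ht)
      (hderiv hφ ht) (eventually_of_mem (hIopen.mem_nhds ht) heq)
  exact deriv_eq_div_of_comp_eventuallyEq (hy2 _ (hJ hx)) (hderiv hχ hx) (hmemΩ x hx)
    (part1 x hx) (eventually_of_mem (hIopen.mem_nhds hx) hy1ξ)

/-- Along a solution `c` of `y'' = f(x,y,y')`, (i) the slope `η'/ξ'` of the
transformed curve has derivative `𝔇q`, and (ii) the transformed curve solves the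
second order ODE `ȳ'' = f̄` with `f̄ ∘ P = 𝔇q/(χ_x + p χ_y)`. -/
theorem stmt4 (U : Set (ℝ × ℝ)) (hU : IsOpen U)
    (χ φ : ℝ × ℝ → ℝ) (hχ : ContDiffOn ℝ 2 χ U) (hφ : ContDiffOn ℝ 2 φ U)
    (f : ℝ × ℝ × ℝ → ℝ)
    (hf : ContinuousOn f
      {z : ℝ × ℝ × ℝ | (z.1, z.2.1) ∈ U ∧
        pdx χ (z.1, z.2.1) + z.2.2 * pdy χ (z.1, z.2.1) ≠ 0})
    (q : ℝ × ℝ × ℝ → ℝ)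
    (hq : ∀ z : ℝ × ℝ × ℝ, q z =
      (pdx φ (z.1, z.2.1) + z.2.2 * pdy φ (z.1, z.2.1)) /
        (pdx χ (z.1, z.2.1) + z.2.2 * pdy χ (z.1, z.2.1)))
    (I : Set ℝ) (hIopen : IsOpen I) (hIconn : I.OrdConnected)
    (c : ℝ → ℝ)
    (hc : ∀ x ∈ I, DifferentiableAt ℝ c x)
    (hc' : ∀ x ∈ I, DifferentiableAt ℝ (deriv c) x)
    (hmemU : ∀ x ∈ I, (x, c x) ∈ U)
    (hmemΩ : ∀ x ∈ I, pdx χ (x, c x) + deriv c x * pdy χ (x, c x) ≠ 0)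
    (hode : ∀ x ∈ I, deriv (deriv c) x = f (x, c x, deriv c x))
    (ξ η : ℝ → ℝ)
    (hξ : ∀ x : ℝ, ξ x = χ (x, c x)) (hη : ∀ x : ℝ, η x = φ (x, c x)) :
    -- (i) the slope function `x ↦ η'(x)/ξ'(x)` has derivative `(𝔇q)(x, c x, c' x)`
    (∀ x ∈ I, HasDerivAt (fun t => deriv η t / deriv ξ t)
      (Dtot f q (x, c x, deriv c x)) x) ∧
    -- (ii) the transformed curve solves `ȳ'' = f̄`
    (∀ J : Set ℝ, J.OrdConnected → ξ '' I ⊆ J →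
      ∀ ybar : ℝ → ℝ,
        (∀ t ∈ J, DifferentiableAt ℝ ybar t) →
        (∀ t ∈ J, DifferentiableAt ℝ (deriv ybar) t) →
        (∀ x ∈ I, ybar (ξ x) = η x) →
        ∀ x ∈ I, deriv (deriv ybar) (ξ x) =
          Dtot f q (x, c x, deriv c x) /
            (pdx χ (x, c x) + deriv c x * pdy χ (x, c x))) :=
  stmt4_general U hU χ φ hχ hφ f q hq I hIopen c hc hc' hmemU hmemΩ hode ξ η hξ hη
end

section
/- Let U ⊆ ℝ² be open, A, B, C, D : U → ℝ be C¹ functions, and define f : U × ℝ → ℝ by f(x,y,p) = A(x,y)p³ + 3B(x,y)p² + 3C(x,y)p + D(x,y). Then for every (x,y,p) ∈ U × ℝ: (1/18)·((f_{pp})² − 2·f_p·f_{ppp}) + (1/6)·(f_{ppy} − 𝔇(f_{ppp})) = −(A_x − B_y + 2(AC − B²)), where the right-hand side is evaluated at (x,y); in particular the left-hand side is independent of p. -/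
/-!
Since `f` is cubic in `p` with coefficients depending only on `(x, y)`, its `p`-derivatives are
again of this shape: `f_p = 3Ap² + 6Bp + 3C`, `f_pp = 6Ap + 6B`, `f_ppp = 6A`, `f_pppp = 0`.
Substituting these (and `𝔇 f_ppp = 6A_x + 6pA_y`) into the left-hand side, all terms involving
`p` cancel.
-/

open Set

noncomputable def cubicInP (a b c d : ℝ × ℝ → ℝ) (w : ℝ × ℝ × ℝ) : ℝ :=
  a (w.1, w.2.1) * w.2.2 ^ 3 + 3 * b (w.1, w.2.1) * w.2.2 ^ 2 + 3 * c (w.1, w.2.1) * w.2.2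
    + d (w.1, w.2.1)

section CubicInP

variable {a b c d : ℝ × ℝ → ℝ} {z : ℝ × ℝ × ℝ}

lemma fderiv_cubicInP_apply (ha : DifferentiableAt ℝ a (z.1, z.2.1))
    (hb : DifferentiableAt ℝ b (z.1, z.2.1)) (hc : DifferentiableAt ℝ c (z.1, z.2.1))
    (hd : DifferentiableAt ℝ d (z.1, z.2.1)) (v : ℝ × ℝ × ℝ) :
    fderiv ℝ (cubicInP a b c d) z v =
      cubicInP (fun q ↦ fderiv ℝ a q (v.1, v.2.1)) (fun q ↦ fderiv ℝ b q (v.1, v.2.1))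
          (fun q ↦ fderiv ℝ c q (v.1, v.2.1)) (fun q ↦ fderiv ℝ d q (v.1, v.2.1)) z
        + v.2.2 * cubicInP 0 a ((2 : ℝ) • b) ((3 : ℝ) • c) z := by
  have hproj : HasFDerivAt (fun w : ℝ × ℝ × ℝ ↦ (w.1, w.2.1))
      ((ContinuousLinearMap.fst ℝ ℝ (ℝ × ℝ)).prod
        ((ContinuousLinearMap.fst ℝ ℝ ℝ).comp (ContinuousLinearMap.snd ℝ ℝ (ℝ × ℝ)))) z :=
    hasFDerivAt_fst.prodMk hasFDerivAt_snd.fst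
  have hp : HasFDerivAt (fun w : ℝ × ℝ × ℝ ↦ w.2.2)
      ((ContinuousLinearMap.snd ℝ ℝ ℝ).comp (ContinuousLinearMap.snd ℝ ℝ (ℝ × ℝ))) z :=
    hasFDerivAt_snd.snd
  have H : HasFDerivAt (cubicInP a b c d) _ z :=
    (((ha.hasFDerivAt.comp z hproj).mul (hp.pow 3)).add
      (((hb.hasFDerivAt.comp z hproj).const_mul 3).mul (hp.pow 2))).add
      (((hc.hasFDerivAt.comp z hproj).const_mul 3).mul hp) |>.add (hd.hasFDerivAt.comp z hproj)
  rw [H.fderiv]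
  simp only [cubicInP, add_apply, smul_apply,
    ContinuousLinearMap.comp_apply, ContinuousLinearMap.prod_apply, ContinuousLinearMap.coe_fst',
    ContinuousLinearMap.coe_snd', Nat.add_one_sub_one, nsmul_eq_mul, Nat.cast_ofNat, pow_one,
    smul_eq_mul, Pi.zero_apply, Pi.smul_apply, zero_mul, zero_add]
  ring

lemma Dx3_cubicInP (ha : DifferentiableAt ℝ a (z.1, z.2.1))
    (hb : DifferentiableAt ℝ b (z.1, z.2.1)) (hc : DifferentiableAt ℝ c (z.1, z.2.1))
    (hd : DifferentiableAt ℝ d (z.1, z.2.1)) :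
    Dx3 (cubicInP a b c d) z = cubicInP (pdx a) (pdx b) (pdx c) (pdx d) z := by
  rw [Dx3, fderiv_cubicInP_apply ha hb hc hd, zero_mul, add_zero]
  rfl

lemma Dy3_cubicInP (ha : DifferentiableAt ℝ a (z.1, z.2.1))
    (hb : DifferentiableAt ℝ b (z.1, z.2.1)) (hc : DifferentiableAt ℝ c (z.1, z.2.1))
    (hd : DifferentiableAt ℝ d (z.1, z.2.1)) :
    Dy3 (cubicInP a b c d) z = cubicInP (pdy a) (pdy b) (pdy c) (pdy d) z := by
  rw [Dy3, fderiv_cubicInP_apply ha hb hc hd, zero_mul, add_zero]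
  rfl

lemma Dp3_cubicInP (ha : DifferentiableAt ℝ a (z.1, z.2.1))
    (hb : DifferentiableAt ℝ b (z.1, z.2.1)) (hc : DifferentiableAt ℝ c (z.1, z.2.1))
    (hd : DifferentiableAt ℝ d (z.1, z.2.1)) :
    Dp3 (cubicInP a b c d) z = cubicInP 0 a ((2 : ℝ) • b) ((3 : ℝ) • c) z := by
  rw [Dp3, fderiv_cubicInP_apply ha hb hc hd, one_mul]
  simp [cubicInP, Prod.mk_zero_zero]

end CubicInP

lemma pdx_zero (z : ℝ × ℝ) : pdx 0 z = 0 := by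
  simp [pdx]

lemma pdy_zero (z : ℝ × ℝ) : pdy 0 z = 0 := by
  simp [pdy]

lemma pdx_const_smul (c : ℝ) (g : ℝ × ℝ → ℝ) (z : ℝ × ℝ) : pdx (c • g) z = c * pdx g z := by
  simp [pdx, fderiv_const_smul_field]

lemma pdy_const_smul (c : ℝ) (g : ℝ × ℝ → ℝ) (z : ℝ × ℝ) : pdy (c • g) z = c * pdy g z := by
  simp [pdy, fderiv_const_smul_field]

section Congr

variable {g h : ℝ × ℝ × ℝ → ℝ} {V : Set (ℝ × ℝ × ℝ)}

lemma Dx3_eqOn (hV : IsOpen V) (hgh : EqOn g h V) : EqOn (Dx3 g) (Dx3 h) V := fun _ hw ↦ by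
  rw [Dx3, Dx3, (hgh.eventuallyEq_of_mem (hV.mem_nhds hw)).fderiv_eq]

lemma Dy3_eqOn (hV : IsOpen V) (hgh : EqOn g h V) : EqOn (Dy3 g) (Dy3 h) V := fun _ hw ↦ by
  rw [Dy3, Dy3, (hgh.eventuallyEq_of_mem (hV.mem_nhds hw)).fderiv_eq]

lemma Dp3_eqOn (hV : IsOpen V) (hgh : EqOn g h V) : EqOn (Dp3 g) (Dp3 h) V := fun _ hw ↦ by
  rw [Dp3, Dp3, (hgh.eventuallyEq_of_mem (hV.mem_nhds hw)).fderiv_eq]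

end Congr

def cylinder (U : Set (ℝ × ℝ)) : Set (ℝ × ℝ × ℝ) := (fun w ↦ (w.1, w.2.1)) ⁻¹' U

lemma isOpen_cylinder {U : Set (ℝ × ℝ)} (hU : IsOpen U) : IsOpen (cylinder U) :=
  hU.preimage (by fun_prop)

section EqOnCylinder

variable {U : Set (ℝ × ℝ)} {a b c d : ℝ × ℝ → ℝ}

lemma eqOn_Dp3_cubicInP (hU : IsOpen U) (ha : DifferentiableOn ℝ a U)
    (hb : DifferentiableOn ℝ b U) (hc : DifferentiableOn ℝ c U) (hd : DifferentiableOn ℝ d U) :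
    EqOn (Dp3 (cubicInP a b c d)) (cubicInP 0 a ((2 : ℝ) • b) ((3 : ℝ) • c)) (cylinder U) :=
  fun _ hw ↦ Dp3_cubicInP (ha.differentiableAt (hU.mem_nhds hw))
    (hb.differentiableAt (hU.mem_nhds hw)) (hc.differentiableAt (hU.mem_nhds hw))
    (hd.differentiableAt (hU.mem_nhds hw))

lemma eqOn_Dp3_Dp3_cubicInP (hU : IsOpen U) (ha : DifferentiableOn ℝ a U)
    (hb : DifferentiableOn ℝ b U) (hc : DifferentiableOn ℝ c U) (hd : DifferentiableOn ℝ d U) :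
    EqOn (Dp3 (Dp3 (cubicInP a b c d))) (cubicInP 0 0 ((2 : ℝ) • a) ((6 : ℝ) • b))
      (cylinder U) := by
  have := (Dp3_eqOn (isOpen_cylinder hU) (eqOn_Dp3_cubicInP hU ha hb hc hd)).trans <|
    eqOn_Dp3_cubicInP hU (differentiableOn_const 0) ha (hb.const_smul 2) (hc.const_smul 3)
  rwa [smul_smul, show (3 : ℝ) * 2 = 6 by norm_num] at this

lemma eqOn_Dp3_Dp3_Dp3_cubicInP (hU : IsOpen U) (ha : DifferentiableOn ℝ a U)
    (hb : DifferentiableOn ℝ b U) (hc : DifferentiableOn ℝ c U) (hd : DifferentiableOn ℝ d U) :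
    EqOn (Dp3 (Dp3 (Dp3 (cubicInP a b c d)))) (cubicInP 0 0 0 ((6 : ℝ) • a)) (cylinder U) := by
  have := (Dp3_eqOn (isOpen_cylinder hU) (eqOn_Dp3_Dp3_cubicInP hU ha hb hc hd)).trans <|
    eqOn_Dp3_cubicInP hU (differentiableOn_const 0) (differentiableOn_const 0)
      (ha.const_smul 2) (hb.const_smul 6)
  rwa [smul_zero, smul_smul, show (3 : ℝ) * 2 = 6 by norm_num] at this

end EqOnCylinder

/-- For a cubic-in-`p` right-hand side, the curvature coefficient
`(1/18)(f_{pp}² − 2 f_p f_{ppp}) + (1/6)(f_{ppy} − 𝔇(f_{ppp}))` equals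
`−(A_x − B_y + 2(AC − B²))`; in particular it is independent of `p`. -/
theorem stmt7 (U : Set (ℝ × ℝ)) (hU : IsOpen U)
    (A B C D : ℝ × ℝ → ℝ)
    (hA : ContDiffOn ℝ 1 A U) (hB : ContDiffOn ℝ 1 B U)
    (hC : ContDiffOn ℝ 1 C U) (hD : ContDiffOn ℝ 1 D U)
    (f : ℝ × ℝ × ℝ → ℝ)
    (hf : ∀ x y p : ℝ, f (x, y, p) =
      A (x, y) * p ^ 3 + 3 * B (x, y) * p ^ 2 + 3 * C (x, y) * p + D (x, y)) :
    ∀ x y p : ℝ, (x, y) ∈ U →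
      (1 / 18) * ((Dp3 (Dp3 f) (x, y, p)) ^ 2
            - 2 * Dp3 f (x, y, p) * Dp3 (Dp3 (Dp3 f)) (x, y, p))
          + (1 / 6) * (Dy3 (Dp3 (Dp3 f)) (x, y, p)
            - Dtot f (Dp3 (Dp3 (Dp3 f))) (x, y, p)) =
        -(pdx A (x, y) - pdy B (x, y)
            + 2 * (A (x, y) * C (x, y) - B (x, y) ^ 2)) := by
  intro x y p hxy
  obtain rfl : f = cubicInP A B C D := funext fun ⟨x, y, p⟩ ↦ hf x y p
  have hA' := hA.differentiableOn one_ne_zero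
  have hB' := hB.differentiableOn one_ne_zero
  have hC' := hC.differentiableOn one_ne_zero
  have hD' := hD.differentiableOn one_ne_zero
  have hV := isOpen_cylinder hU
  have h1 := eqOn_Dp3_cubicInP hU hA' hB' hC' hD'
  have h2 := eqOn_Dp3_Dp3_cubicInP hU hA' hB' hC' hD'
  have h3 := eqOn_Dp3_Dp3_Dp3_cubicInP hU hA' hB' hC' hD'
  have hz : (x, y, p) ∈ cylinder U := hxy
  have hAz := hA'.differentiableAt (hU.mem_nhds hxy)
  have hBz := hB'.differentiableAt (hU.mem_nhds hxy)
  have h0z : DifferentiableAt ℝ (0 : ℝ × ℝ → ℝ) (x, y) := differentiableAt_const 0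
  rw [Dtot, h1 hz, h2 hz, h3 hz, Dy3_eqOn hV h2 hz, Dx3_eqOn hV h3 hz, Dy3_eqOn hV h3 hz,
    Dp3_eqOn hV h3 hz, Dy3_cubicInP (z := (x, y, p)) h0z h0z (hAz.const_smul 2) (hBz.const_smul 6),
    Dx3_cubicInP (z := (x, y, p)) h0z h0z h0z (hAz.const_smul 6),
    Dy3_cubicInP (z := (x, y, p)) h0z h0z h0z (hAz.const_smul 6),
    Dp3_cubicInP (z := (x, y, p)) h0z h0z h0z (hAz.const_smul 6)]
  simp only [cubicInP, pdx_zero, pdy_zero, pdx_const_smul, pdy_const_smul, Pi.zero_apply,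
    Pi.smul_apply, smul_eq_mul]
  ring
end
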